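/- arXiv:2408.05550 — 2 statements merged into one kernel-verified Lean document; each statement's English description precedes it below -/
import Mathlib

section
/- Let (D,∂) be a dg-division ring such that ker(∂) satisfies condition (REG). Then ∂ maps the graded centre Z_gr(D) into itself, and (Z_gr(D), ∂) is itself a dg-division ring. Moreover, the ring Z_gr(D) ∩ ker(∂) is commutative, and if 2 ≠ 0 in D then every nonzero homogeneous element of Z_gr(D) ∩ ker(∂) has even degree. -/
/-- The data of a differential making a `ℤ`-graded ring a dg-ring. -/
structure DGRingData {A : Type*} [Ring A] (𝒜 : ℤ → AddSubgroup A) : Type _ where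
  d : A →+ A
  d_mem : ∀ ⦃i : ℤ⦄ ⦃a : A⦄, a ∈ 𝒜 i → d a ∈ 𝒜 (i + 1)
  d_sq : ∀ a : A, d (d a) = 0
  leibniz : ∀ ⦃i : ℤ⦄ ⦃a : A⦄, a ∈ 𝒜 i → ∀ b : A,
    d (a * b) = d a * b + (((-1 : ℤˣ) ^ i : ℤˣ) : ℤ) • (a * d b)

variable {A : Type*} [Ring A] (𝒜 : ℤ → AddSubgroup A) [GradedRing 𝒜] (D : DGRingData 𝒜)

/-- A dg-left ideal: a graded, `d`-stable left ideal, as an additive subgroup. -/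
def IsDGLeftIdeal (I : AddSubgroup A) : Prop :=
  (∀ a : A, ∀ x ∈ I, a * x ∈ I) ∧
  (∀ x ∈ I, ∀ i : ℤ, GradedRing.proj 𝒜 i x ∈ I) ∧
  (∀ x ∈ I, D.d x ∈ I)

/-- A dg-right ideal: a graded, `d`-stable right ideal, as an additive subgroup. -/
def IsDGRightIdeal (I : AddSubgroup A) : Prop :=
  (∀ a : A, ∀ x ∈ I, x * a ∈ I) ∧
  (∀ x ∈ I, ∀ i : ℤ, GradedRing.proj 𝒜 i x ∈ I) ∧
  (∀ x ∈ I, D.d x ∈ I)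

/-- `ker d` is a gr-division ring: it is nonzero and every nonzero homogeneous cycle
is invertible within `ker d`. -/
def KerIsGrDivisionRing : Prop :=
  (∃ x : A, D.d x = 0 ∧ x ≠ 0) ∧
  ∀ (i : ℤ) (a : A), a ∈ 𝒜 i → D.d a = 0 → a ≠ 0 →
    ∃ b : A, D.d b = 0 ∧ a * b = 1 ∧ b * a = 1

/-- Condition (REG): a homogeneous cycle is left regular in `ker d` iff it is right
regular in `ker d`. -/
def REG : Prop :=
  ∀ (i : ℤ) (u : A), u ∈ 𝒜 i → D.d u = 0 →
    ((∀ x : A, D.d x = 0 → u * x = 0 → x = 0) ↔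
      (∀ x : A, D.d x = 0 → x * u = 0 → x = 0))

/-- A homogeneous element `a` of degree `i` which graded-commutes with every
homogeneous element: `a·b = (−1)^{i·j}·b·a` for all `b ∈ 𝒜 j`. -/
def IsGrCentralHomog {A : Type*} [Ring A] (𝒜 : ℤ → AddSubgroup A) (a : A) : Prop :=
  ∃ i : ℤ, a ∈ 𝒜 i ∧ ∀ (j : ℤ), ∀ b ∈ 𝒜 j,
    a * b = (((-1 : ℤˣ) ^ (i * j) : ℤˣ) : ℤ) • (b * a)

/-- The graded centre: the subring generated by the graded-central homogeneous elements. -/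
def grCentre {A : Type*} [Ring A] (𝒜 : ℤ → AddSubgroup A) : Subring A :=
  Subring.closure {a : A | IsGrCentralHomog 𝒜 a}

/-! ### Auxiliary material for `stmt_4` -/

section SignLemmas

/-- The sign `(-1)^n` as an integer. -/
def E (n : ℤ) : ℤ := (((-1 : ℤˣ) ^ n : ℤˣ) : ℤ)

lemma E_def (n : ℤ) : E n = (((-1 : ℤˣ) ^ n : ℤˣ) : ℤ) := rfl

lemma E_add (m n : ℤ) : E (m + n) = E m * E n := by
  unfold E; rw [zpow_add]; push_cast; ring

lemma E_even {n : ℤ} (h : Even n) : E n = 1 := by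
  unfold E; rw [Even.neg_one_zpow h]; rfl

lemma E_odd {n : ℤ} (h : Odd n) : E n = -1 := by
  obtain ⟨m, rfl⟩ := h
  unfold E
  rw [zpow_add, Even.neg_one_zpow ⟨m, (two_mul m).symm ▸ rfl⟩, one_mul, zpow_one]
  rfl

lemma E_one_or (n : ℤ) : E n = 1 ∨ E n = -1 := by
  rcases Int.even_or_odd n with h | h
  · exact Or.inl (E_even h)
  · exact Or.inr (E_odd h)

lemma E_mul_self (n : ℤ) : E n * E n = 1 := by
  rcases E_one_or n with h | h <;> rw [h] <;> ring

lemma E_neg (n : ℤ) : E (-n) = E n := by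
  rcases Int.even_or_odd n with h | h
  · rw [E_even h, E_even h.neg]
  · rw [E_odd h, E_odd h.neg]

lemma E_smul_smul {A : Type*} [Ring A] (n : ℤ) (x : A) : E n • E n • x = x := by
  rw [smul_smul, E_mul_self, one_smul]

lemma E_two_mul (n : ℤ) : E (2 * n) = 1 := E_even ⟨n, two_mul n⟩

end SignLemmas

section Aux

variable {A : Type*} [Ring A] (𝒜 : ℤ → AddSubgroup A) [GradedRing 𝒜] (D : DGRingData 𝒜)

open DirectSum

/-- Centrality as a homogeneous element of a *specified* degree. -/
def Chom (k : ℤ) (a : A) : Prop :=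
  a ∈ 𝒜 k ∧ ∀ j : ℤ, ∀ b ∈ 𝒜 j, a * b = E (k * j) • (b * a)

variable {𝒜}

lemma chom_isGrCentral {k : ℤ} {a : A} (h : Chom 𝒜 k a) : IsGrCentralHomog 𝒜 a :=
  ⟨k, h.1, h.2⟩

lemma chom_zero (k : ℤ) : Chom 𝒜 k (0 : A) :=
  ⟨zero_mem _, fun _ _ _ => by simp⟩

lemma chom_add {k : ℤ} {a b : A} (ha : Chom 𝒜 k a) (hb : Chom 𝒜 k b) :
    Chom 𝒜 k (a + b) := by
  refine ⟨add_mem ha.1 hb.1, fun j c hc => ?_⟩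
  rw [add_mul, mul_add, ha.2 j c hc, hb.2 j c hc, smul_add]

lemma chom_neg {k : ℤ} {a : A} (ha : Chom 𝒜 k a) : Chom 𝒜 k (-a) := by
  refine ⟨neg_mem ha.1, fun j c hc => ?_⟩
  rw [neg_mul, mul_neg, ha.2 j c hc, smul_neg]

lemma chom_one : Chom 𝒜 0 (1 : A) := by
  refine ⟨SetLike.one_mem_graded 𝒜, fun j b _ => ?_⟩
  have : (0 : ℤ) * j = 0 := by ring
  rw [this, one_mul, mul_one, E_even Even.zero, one_smul]

lemma chom_mul {k l : ℤ} {a b : A} (ha : Chom 𝒜 k a) (hb : Chom 𝒜 l b) :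
    Chom 𝒜 (k + l) (a * b) := by
  refine ⟨SetLike.mul_mem_graded ha.1 hb.1, fun j c hc => ?_⟩
  have hcb : b * c = E (l * j) • (c * b) := hb.2 j c hc
  have hca : a * c = E (k * j) • (c * a) := ha.2 j c hc
  calc a * b * c = a * (b * c) := by rw [mul_assoc]
    _ = E (l * j) • (a * (c * b)) := by rw [hcb, mul_smul_comm]
    _ = E (l * j) • ((a * c) * b) := by rw [mul_assoc]
    _ = E (l * j) • E (k * j) • ((c * a) * b) := by rw [hca, smul_mul_assoc]
    _ = (E (l * j) * E (k * j)) • (c * (a * b)) := by rw [smul_smul, mul_assoc]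
    _ = E ((k + l) * j) • (c * (a * b)) := by
        rw [← E_add]; congr 1; ring

variable (𝒜) in
/-- The generating set of the graded centre. -/
abbrev grS : Set A := {a : A | IsGrCentralHomog 𝒜 a}

lemma grCentre_eq_addClosure :
    (grCentre 𝒜 : Set A) = (AddSubgroup.closure (grS 𝒜) : Set A) := by
  apply le_antisymm
  · have hmul : ∀ x ∈ AddSubgroup.closure (grS 𝒜), ∀ y ∈ AddSubgroup.closure (grS 𝒜),
        x * y ∈ AddSubgroup.closure (grS 𝒜) := by
      intro x hx
      refine AddSubgroup.closure_induction (fun a ha => ?_) ?_ ?_ ?_ hx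
      · intro y hy
        refine AddSubgroup.closure_induction (fun b hb => ?_) ?_ ?_ ?_ hy
        · obtain ⟨i, hai, hac⟩ := ha
          obtain ⟨j, hbj, hbc⟩ := hb
          exact AddSubgroup.subset_closure
            (chom_isGrCentral (chom_mul ⟨hai, hac⟩ ⟨hbj, hbc⟩))
        · simpa using zero_mem _
        · intro u v _ _ pu pv
          rw [mul_add]; exact add_mem pu pv
        · intro u _ pu
          rw [mul_neg]; exact neg_mem pu
      · intro y _; simpa using zero_mem _
      · intro u v _ _ pu pv y hy
        rw [add_mul]; exact add_mem (pu y hy) (pv y hy)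
      · intro u _ pu y hy
        rw [neg_mul]; exact neg_mem (pu y hy)
    let R : Subring A :=
      { carrier := (AddSubgroup.closure (grS 𝒜) : Set A)
        zero_mem' := zero_mem _
        add_mem' := fun h1 h2 => add_mem h1 h2
        neg_mem' := fun h1 => neg_mem h1
        one_mem' := AddSubgroup.subset_closure (chom_isGrCentral chom_one)
        mul_mem' := fun h1 h2 => hmul _ h1 _ h2 }
    exact Subring.closure_le (t := R) |>.mpr AddSubgroup.subset_closure
  · intro x hx
    refine AddSubgroup.closure_induction (fun a ha => Subring.subset_closure ha)
      (zero_mem _) (fun u v _ _ pu pv => add_mem pu pv)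
      (fun u _ pu => neg_mem pu) hx

lemma chom_mem_grCentre {k : ℤ} {a : A} (h : Chom 𝒜 k a) : a ∈ grCentre 𝒜 :=
  Subring.subset_closure (chom_isGrCentral h)

/-! ### Projection lemmas -/

lemma proj_mem (i : ℤ) (x : A) : GradedRing.proj 𝒜 i x ∈ 𝒜 i := by
  rw [GradedRing.proj_apply]; exact SetLike.coe_mem _

lemma proj_of_mem_same {i : ℤ} {x : A} (h : x ∈ 𝒜 i) : GradedRing.proj 𝒜 i x = x := by
  rw [GradedRing.proj_apply, DirectSum.decompose_of_mem_same 𝒜 h]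

lemma proj_of_mem_ne {i j : ℤ} {x : A} (h : x ∈ 𝒜 i) (hij : i ≠ j) :
    GradedRing.proj 𝒜 j x = 0 := by
  rw [GradedRing.proj_apply, DirectSum.decompose_of_mem_ne 𝒜 h hij]

lemma exists_sum_proj (x : A) :
    ∃ s : Finset ℤ, ∑ i ∈ s, GradedRing.proj 𝒜 i x = x := by
  classical
  refine ⟨(DirectSum.decompose 𝒜 x).support, ?_⟩
  simp_rw [GradedRing.proj_apply]
  exact DirectSum.sum_support_decompose 𝒜 x

lemma eq_zero_of_all_proj_zero {x : A} (h : ∀ i, GradedRing.proj 𝒜 i x = 0) : x = 0 := by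
  obtain ⟨s, hs⟩ := exists_sum_proj (𝒜 := 𝒜) x
  rw [← hs]
  exact Finset.sum_eq_zero fun i _ => h i

/-! ### Differential lemmas -/

lemma leibniz' {i : ℤ} {a : A} (h : a ∈ 𝒜 i) (b : A) :
    D.d (a * b) = D.d a * b + E i • (a * D.d b) := D.leibniz h b

lemma d_one : D.d 1 = 0 := by
  have h := leibniz' D (SetLike.one_mem_graded 𝒜) 1
  simp only [one_mul, mul_one, E_even Even.zero, one_smul] at h
  exact left_eq_add.mp h

variable (𝒜) in
lemma hom_induction (P : A → Prop) (h0 : P 0)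
    (hadd : ∀ x y, P x → P y → P (x + y))
    (hhom : ∀ i : ℤ, ∀ x ∈ 𝒜 i, P x) : ∀ x, P x := by
  intro x
  refine DirectSum.Decomposition.inductionOn 𝒜 h0 ?_ hadd x
  intro i m
  exact hhom i m (SetLike.coe_mem m)

lemma d_mul_cycle {i : ℤ} {a : A} (ha : a ∈ 𝒜 i) (hda : D.d a = 0) (x : A) :
    D.d (x * a) = D.d x * a := by
  induction x using hom_induction 𝒜 with
  | h0 => simp
  | hadd u v hu hv => rw [add_mul, map_add, hu, hv, map_add, add_mul]
  | hhom j x hx => rw [leibniz' D hx, hda, mul_zero, smul_zero, add_zero]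

lemma proj_mul_right {i : ℤ} {a : A} (ha : a ∈ 𝒜 i) (x : A) (k : ℤ) :
    GradedRing.proj 𝒜 k (x * a) = GradedRing.proj 𝒜 (k - i) x * a := by
  induction x using hom_induction 𝒜 with
  | h0 => simp
  | hadd u v hu hv => rw [add_mul, map_add, hu, hv, map_add, add_mul]
  | hhom j x hx =>
    have hmem : x * a ∈ 𝒜 (j + i) := SetLike.mul_mem_graded hx ha
    by_cases hk : j + i = k
    · have hj : k - i = j := by omega
      rw [proj_of_mem_same (hk ▸ hmem), hj, proj_of_mem_same hx]
    · have hj : j ≠ k - i := by omega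
      rw [proj_of_mem_ne hmem hk, proj_of_mem_ne hx hj, zero_mul]

lemma proj_mul_left {i : ℤ} {a : A} (ha : a ∈ 𝒜 i) (x : A) (k : ℤ) :
    GradedRing.proj 𝒜 k (a * x) = a * GradedRing.proj 𝒜 (k - i) x := by
  induction x using hom_induction 𝒜 with
  | h0 => simp
  | hadd u v hu hv => rw [mul_add, map_add, hu, hv, map_add, mul_add]
  | hhom j x hx =>
    have hmem : a * x ∈ 𝒜 (i + j) := SetLike.mul_mem_graded ha hx
    by_cases hk : i + j = k
    · have hj : k - i = j := by omega
      rw [proj_of_mem_same (hk ▸ hmem), hj, proj_of_mem_same hx]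
    · have hj : j ≠ k - i := by omega
      rw [proj_of_mem_ne hmem hk, proj_of_mem_ne hx hj, mul_zero]

lemma d_proj (x : A) (k : ℤ) :
    D.d (GradedRing.proj 𝒜 k x) = GradedRing.proj 𝒜 (k + 1) (D.d x) := by
  induction x using hom_induction 𝒜 with
  | h0 => simp
  | hadd u v hu hv => rw [map_add, map_add, hu, hv, map_add, map_add]
  | hhom j x hx =>
    have hd : D.d x ∈ 𝒜 (j + 1) := D.d_mem hx
    by_cases hk : j = k
    · subst hk
      rw [proj_of_mem_same hx, proj_of_mem_same hd]
    · rw [proj_of_mem_ne hx hk, map_zero,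
        proj_of_mem_ne hd (by omega), ]

lemma d_proj_zero {x : A} (hx : D.d x = 0) (k : ℤ) :
    D.d (GradedRing.proj 𝒜 k x) = 0 := by
  rw [d_proj, hx, map_zero]

/-! ### Invertibility of nonzero homogeneous cycles -/

lemma exists_inv
    (hleft : ∀ I : AddSubgroup A, IsDGLeftIdeal 𝒜 D I → I = ⊥ ∨ I = ⊤)
    (hright : ∀ I : AddSubgroup A, IsDGRightIdeal 𝒜 D I → I = ⊥ ∨ I = ⊤)
    {i : ℤ} {a : A} (ha : a ∈ 𝒜 i) (hda : D.d a = 0) (h0 : a ≠ 0) :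
    ∃ b : A, b ∈ 𝒜 (-i) ∧ D.d b = 0 ∧ a * b = 1 ∧ b * a = 1 := by
  -- the left ideal A·a
  have hIl : ∃ b : A, b * a = 1 := by
    set I : AddSubgroup A := (AddMonoidHom.mulRight a).range with hI
    have hmem : ∀ z : A, z ∈ I ↔ ∃ y : A, y * a = z := by
      intro z
      constructor
      · rintro ⟨y, rfl⟩; exact ⟨y, rfl⟩
      · rintro ⟨y, rfl⟩; exact ⟨y, rfl⟩
    have hIdg : IsDGLeftIdeal 𝒜 D I := by
      refine ⟨?_, ?_, ?_⟩
      · rintro b x hx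
        obtain ⟨y, rfl⟩ := (hmem x).mp hx
        exact (hmem _).mpr ⟨b * y, mul_assoc b y a⟩
      · intro x hx k
        obtain ⟨y, rfl⟩ := (hmem x).mp hx
        rw [proj_mul_right ha]
        exact (hmem _).mpr ⟨_, rfl⟩
      · intro x hx
        obtain ⟨y, rfl⟩ := (hmem x).mp hx
        rw [d_mul_cycle D ha hda]
        exact (hmem _).mpr ⟨_, rfl⟩
    rcases hleft I hIdg with hbot | htop
    · exfalso
      have : a ∈ I := (hmem a).mpr ⟨1, one_mul a⟩
      rw [hbot] at this
      exact h0 (AddSubgroup.mem_bot.mp this)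
    · have : (1 : A) ∈ I := htop ▸ AddSubgroup.mem_top 1
      exact (hmem 1).mp this
  -- the right ideal a·A
  have hIr : ∃ c : A, a * c = 1 := by
    set I : AddSubgroup A := (AddMonoidHom.mulLeft a).range with hI
    have hmem : ∀ z : A, z ∈ I ↔ ∃ y : A, a * y = z := by
      intro z
      constructor
      · rintro ⟨y, rfl⟩; exact ⟨y, rfl⟩
      · rintro ⟨y, rfl⟩; exact ⟨y, rfl⟩
    have hIdg : IsDGRightIdeal 𝒜 D I := by
      refine ⟨?_, ?_, ?_⟩
      · rintro b x hx
        obtain ⟨y, rfl⟩ := (hmem x).mp hx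
        exact (hmem _).mpr ⟨y * b, (mul_assoc a y b).symm⟩
      · intro x hx k
        obtain ⟨y, rfl⟩ := (hmem x).mp hx
        rw [proj_mul_left ha]
        exact (hmem _).mpr ⟨_, rfl⟩
      · intro x hx
        obtain ⟨y, rfl⟩ := (hmem x).mp hx
        rw [leibniz' D ha, hda, zero_mul, zero_add, ← mul_smul_comm]
        exact (hmem _).mpr ⟨_, rfl⟩
    rcases hright I hIdg with hbot | htop
    · exfalso
      have : a ∈ I := (hmem a).mpr ⟨1, mul_one a⟩
      rw [hbot] at this
      exact h0 (AddSubgroup.mem_bot.mp this)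
    · have : (1 : A) ∈ I := htop ▸ AddSubgroup.mem_top 1
      exact (hmem 1).mp this
  obtain ⟨b, hb⟩ := hIl
  obtain ⟨c, hc⟩ := hIr
  -- homogeneous components of degree -i
  set b' := GradedRing.proj 𝒜 (-i) b with hb'
  set c' := GradedRing.proj 𝒜 (-i) c with hc'
  have hb'a : b' * a = 1 := by
    have := proj_mul_right (𝒜 := 𝒜) ha b 0
    rw [hb, proj_of_mem_same (SetLike.one_mem_graded 𝒜), zero_sub] at this
    exact this.symm
  have hac' : a * c' = 1 := by
    have := proj_mul_left (𝒜 := 𝒜) ha c 0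
    rw [hc, proj_of_mem_same (SetLike.one_mem_graded 𝒜), zero_sub] at this
    exact this.symm
  have hbc : b' = c' := by
    calc b' = b' * (a * c') := by rw [hac', mul_one]
      _ = (b' * a) * c' := by rw [mul_assoc]
      _ = c' := by rw [hb'a, one_mul]
  -- the inverse is a cycle
  have hdc' : D.d c' = 0 := by
    have h1 : D.d (a * c') = 0 := by rw [hac', d_one]
    rw [leibniz' D ha, hda, zero_mul, zero_add] at h1
    have h2 : a * D.d c' = 0 := by
      have h3 := congrArg (fun z => E i • z) h1
      simp only [smul_zero] at h3
      rwa [E_smul_smul] at h3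
    calc D.d c' = (b' * a) * D.d c' := by rw [hb'a, one_mul]
      _ = b' * (a * D.d c') := by rw [mul_assoc]
      _ = 0 := by rw [h2, mul_zero]
  exact ⟨c', hbc ▸ proj_mem (-i) b, hdc', hac', hbc ▸ hb'a⟩

/-! ### The differential of a graded-central element is graded-central -/

lemma chom_d {k : ℤ} {a : A} (h : Chom 𝒜 k a) : Chom 𝒜 (k + 1) (D.d a) := by
  refine ⟨D.d_mem h.1, fun j b hb => ?_⟩
  have e1 := leibniz' D h.1 b
  have e2 : D.d (a * b) = E (k * j) • (D.d b * a) + E (k * j + j) • (b * D.d a) := by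
    rw [h.2 j b hb, map_zsmul, leibniz' D hb a, smul_add, smul_smul, ← E_add]
  have e3 : a * D.d b = E (k * j + k) • (D.d b * a) := by
    have := h.2 (j + 1) (D.d b) (D.d_mem hb)
    rwa [show k * (j + 1) = k * j + k by ring] at this
  have e4 : D.d a * b = D.d (a * b) - E k • (a * D.d b) := by
    rw [e1]; abel
  have hsc : E k • (E (k * j + k) • (D.d b * a)) = E (k * j) • (D.d b * a) := by
    rw [smul_smul, ← E_add, show k + (k * j + k) = k * j + 2 * k by ring,
      E_add, E_two_mul, mul_one]
  rw [e4, e2, e3, hsc, show (k + 1) * j = k * j + j by ring]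
  abel

/-! ### Inverses of central homogeneous cycles are central -/

lemma chom_inv {k : ℤ} {y b : A} (h : Chom 𝒜 k y) (hbmem : b ∈ 𝒜 (-k))
    (hyb : y * b = 1) (hby : b * y = 1) : Chom 𝒜 (-k) b := by
  refine ⟨hbmem, fun j c hc => ?_⟩
  have hcy : c * y = E (k * j) • (y * c) := by
    rw [h.2 j c hc, E_smul_smul]
  calc b * c = b * c * (y * b) := by rw [hyb, mul_one]
    _ = b * ((c * y) * b) := by noncomm_ring
    _ = b * ((E (k * j) • (y * c)) * b) := by rw [hcy]
    _ = E (k * j) • (b * ((y * c) * b)) := by rw [smul_mul_assoc, mul_smul_comm]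
    _ = E (k * j) • ((b * y) * (c * b)) := by
        rw [show b * ((y * c) * b) = (b * y) * (c * b) by noncomm_ring]
    _ = E (k * j) • (c * b) := by rw [hby, one_mul]
    _ = E (-k * j) • (c * b) := by rw [show -k * j = -(k * j) by ring, E_neg]

/-! ### `2 = 0` if there is a nonzero odd-degree central homogeneous cycle -/

lemma two_eq_zero_of_odd
    (hleft : ∀ I : AddSubgroup A, IsDGLeftIdeal 𝒜 D I → I = ⊥ ∨ I = ⊤)
    (hright : ∀ I : AddSubgroup A, IsDGRightIdeal 𝒜 D I → I = ⊥ ∨ I = ⊤)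
    {k : ℤ} {a : A} (hA : Chom 𝒜 k a) (hda : D.d a = 0) (ha0 : a ≠ 0)
    (hk : Odd k) : (2 : A) = 0 := by
  obtain ⟨b, hbmem, hdb, hab, hba⟩ := exists_inv D hleft hright hA.1 hda ha0
  have hsq : a * a = -(a * a) := by
    have := hA.2 k a hA.1
    rwa [E_odd (hk.mul hk), neg_smul, one_smul] at this
  have h4 : a * a + a * a = 0 := add_eq_zero_iff_eq_neg.mpr hsq
  have hunit : b * (a * a) * b = 1 := by
    rw [show b * (a * a) * b = (b * a) * (a * b) by noncomm_ring, hba, hab, one_mul]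
  calc (2 : A) = 1 + 1 := by norm_num
    _ = b * (a * a) * b + b * (a * a) * b := by rw [hunit]
    _ = b * (a * a + a * a) * b := by rw [mul_add, add_mul]
    _ = 0 := by rw [h4, mul_zero, zero_mul]

/-! ### Homogeneous central cycles commute -/

lemma homog_comm
    (hleft : ∀ I : AddSubgroup A, IsDGLeftIdeal 𝒜 D I → I = ⊥ ∨ I = ⊤)
    (hright : ∀ I : AddSubgroup A, IsDGRightIdeal 𝒜 D I → I = ⊥ ∨ I = ⊤)
    {k l : ℤ} {a b : A} (hA : Chom 𝒜 k a) (hB : Chom 𝒜 l b)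
    (hda : D.d a = 0) : a * b = b * a := by
  rcases Int.even_or_odd (k * l) with he | ho
  · rw [hA.2 l b hB.1, E_even he, one_smul]
  · by_cases ha0 : a = 0
    · rw [ha0, zero_mul, mul_zero]
    · have hk : Odd k := (Int.odd_mul.mp ho).1
      have h2 : (2 : A) = 0 := two_eq_zero_of_odd D hleft hright hA hda ha0 hk
      rw [hA.2 l b hB.1, E_odd ho, neg_smul, one_smul]
      have : b * a + b * a = 0 := by
        rw [← two_mul, h2, zero_mul]
      rw [neg_eq_iff_add_eq_zero.mpr this]

/-! ### Projections of elements of the graded centre are graded-central -/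

lemma chom_proj {x : A} (hx : x ∈ grCentre 𝒜) (k : ℤ) :
    Chom 𝒜 k (GradedRing.proj 𝒜 k x) := by
  have hx' : x ∈ AddSubgroup.closure (grS 𝒜) := by
    have h := grCentre_eq_addClosure (𝒜 := 𝒜)
    have : x ∈ (grCentre 𝒜 : Set A) := hx
    rw [h] at this
    exact this
  refine AddSubgroup.closure_induction (p := fun z _ => ∀ k : ℤ,
      Chom 𝒜 k (GradedRing.proj 𝒜 k z)) ?_ ?_ ?_ ?_ hx' k
  · rintro a ⟨i, hai, hac⟩ k
    by_cases hik : i = k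
    · subst hik
      rw [proj_of_mem_same hai]
      exact ⟨hai, hac⟩
    · rw [proj_of_mem_ne hai hik]
      exact chom_zero k
  · intro k; rw [map_zero]; exact chom_zero k
  · intro u v _ _ pu pv k
    rw [map_add]; exact chom_add (pu k) (pv k)
  · intro u _ pu k
    rw [map_neg]; exact chom_neg (pu k)

/-! ### Central units from nonzero central homogeneous cycles -/

lemma cycle_unit
    (hleft : ∀ I : AddSubgroup A, IsDGLeftIdeal 𝒜 D I → I = ⊥ ∨ I = ⊤)
    (hright : ∀ I : AddSubgroup A, IsDGRightIdeal 𝒜 D I → I = ⊥ ∨ I = ⊤)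
    {k : ℤ} {y : A} (h : Chom 𝒜 k y) (hdy : D.d y = 0) (hy0 : y ≠ 0) :
    ∃ b ∈ grCentre 𝒜, y * b = 1 ∧ b * y = 1 := by
  obtain ⟨b, hbmem, hdb, hyb, hby⟩ := exists_inv D hleft hright h.1 hdy hy0
  exact ⟨b, chom_mem_grCentre (chom_inv h hbmem hyb hby), hyb, hby⟩

lemma dg_ideal_unit
    (hleft : ∀ I : AddSubgroup A, IsDGLeftIdeal 𝒜 D I → I = ⊥ ∨ I = ⊤)
    (hright : ∀ I : AddSubgroup A, IsDGRightIdeal 𝒜 D I → I = ⊥ ∨ I = ⊤)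
    (I : AddSubgroup A) (hsub : (I : Set A) ⊆ (grCentre 𝒜 : Set A))
    (hproj : ∀ x ∈ I, ∀ i : ℤ, GradedRing.proj 𝒜 i x ∈ I)
    (hd : ∀ x ∈ I, D.d x ∈ I) {x : A} (hxI : x ∈ I) (hx0 : x ≠ 0) :
    ∃ y ∈ I, ∃ b ∈ grCentre 𝒜, y * b = 1 ∧ b * y = 1 := by
  have hex : ∃ k : ℤ, GradedRing.proj 𝒜 k x ≠ 0 := by
    by_contra hc
    push_neg at hc
    exact hx0 (eq_zero_of_all_proj_zero hc)
  obtain ⟨k, hk0⟩ := hex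
  have hy0I : GradedRing.proj 𝒜 k x ∈ I := hproj x hxI k
  have hch : Chom 𝒜 k (GradedRing.proj 𝒜 k x) := chom_proj (hsub hxI) k
  by_cases hdy : D.d (GradedRing.proj 𝒜 k x) = 0
  · exact ⟨_, hy0I, cycle_unit D hleft hright hch hdy hk0⟩
  · exact ⟨_, hd _ hy0I,
      cycle_unit D hleft hright (chom_d D hch) (D.d_sq _) hdy⟩

end Aux

/-- let `(D,∂)` be a dg-division ring whose cycles satisfy (REG). Then
`∂` maps the graded centre into itself, `(Z_gr(D),∂)` is a dg-division ring, the ring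
`Z_gr(D) ∩ ker ∂` is commutative, and if `2 ≠ 0` every nonzero homogeneous element of
`Z_gr(D) ∩ ker ∂` has even degree. -/
theorem stmt_4 {A : Type*} [Ring A] [Nontrivial A] (𝒜 : ℤ → AddSubgroup A) [GradedRing 𝒜]
    (D : DGRingData 𝒜)
    (hleft : ∀ I : AddSubgroup A, IsDGLeftIdeal 𝒜 D I → I = ⊥ ∨ I = ⊤)
    (hright : ∀ I : AddSubgroup A, IsDGRightIdeal 𝒜 D I → I = ⊥ ∨ I = ⊤)
    (hreg : REG 𝒜 D) :
    -- `∂` maps the graded centre into itself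
    (∀ x ∈ grCentre 𝒜, D.d x ∈ grCentre 𝒜) ∧
    -- `(Z_gr(D), ∂)` is a dg-division ring: it is nonzero, and its dg-left ideals and
    -- dg-right ideals are trivial
    (∃ x ∈ grCentre 𝒜, x ≠ 0) ∧
    (∀ I : AddSubgroup A, (I : Set A) ⊆ (grCentre 𝒜 : Set A) →
      (∀ a ∈ grCentre 𝒜, ∀ x ∈ I, a * x ∈ I) →
      (∀ x ∈ I, ∀ i : ℤ, GradedRing.proj 𝒜 i x ∈ I) →
      (∀ x ∈ I, D.d x ∈ I) →
      I = ⊥ ∨ (I : Set A) = (grCentre 𝒜 : Set A)) ∧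
    (∀ I : AddSubgroup A, (I : Set A) ⊆ (grCentre 𝒜 : Set A) →
      (∀ a ∈ grCentre 𝒜, ∀ x ∈ I, x * a ∈ I) →
      (∀ x ∈ I, ∀ i : ℤ, GradedRing.proj 𝒜 i x ∈ I) →
      (∀ x ∈ I, D.d x ∈ I) →
      I = ⊥ ∨ (I : Set A) = (grCentre 𝒜 : Set A)) ∧
    -- `Z_gr(D) ∩ ker ∂` is commutative
    (∀ x ∈ grCentre 𝒜, ∀ y ∈ grCentre 𝒜, D.d x = 0 → D.d y = 0 → x * y = y * x) ∧
    -- if `2 ≠ 0` in `D`, nonzero homogeneous elements of `Z_gr(D) ∩ ker ∂` have even degree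
    ((2 : A) ≠ 0 → ∀ (i : ℤ) (a : A), a ∈ 𝒜 i → a ∈ grCentre 𝒜 → D.d a = 0 → a ≠ 0 →
      Even i) := by
  classical
  refine ⟨?_, ⟨1, Subring.one_mem _, one_ne_zero⟩, ?_, ?_, ?_, ?_⟩
  · -- d maps grCentre into itself
    intro x hx
    have hx' : x ∈ AddSubgroup.closure (grS 𝒜) := by
      have h := grCentre_eq_addClosure (𝒜 := 𝒜)
      have hset : x ∈ (grCentre 𝒜 : Set A) := hx
      rw [h] at hset
      exact hset
    refine AddSubgroup.closure_induction
      (p := fun z _ => D.d z ∈ grCentre 𝒜) ?_ ?_ ?_ ?_ hx'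
    · rintro a ⟨i, hai, hac⟩
      exact chom_mem_grCentre (chom_d D ⟨hai, hac⟩)
    · show D.d (0 : A) ∈ grCentre 𝒜
      rw [map_zero]; exact zero_mem _
    · intro u v _ _ pu pv
      show D.d (u + v) ∈ grCentre 𝒜
      rw [map_add]; exact add_mem pu pv
    · intro u _ pu
      show D.d (-u) ∈ grCentre 𝒜
      rw [map_neg]; exact neg_mem pu
  · -- dg-left ideals of the graded centre are trivial
    intro I hsub hmul hproj hd
    by_cases hbot : I = ⊥
    · exact Or.inl hbot
    · right
      have hex : ∃ x ∈ I, x ≠ 0 := by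
        by_contra hc
        push_neg at hc
        exact hbot ((AddSubgroup.eq_bot_iff_forall I).mpr hc)
      obtain ⟨x, hxI, hx0⟩ := hex
      obtain ⟨y, hyI, b, hbZ, hyb, hby⟩ :=
        dg_ideal_unit D hleft hright I hsub hproj hd hxI hx0
      have h1 : (1 : A) ∈ I := hby ▸ hmul b hbZ y hyI
      refine Set.Subset.antisymm hsub fun z hz => ?_
      have := hmul z hz 1 h1
      rwa [mul_one] at this
  · -- dg-right ideals of the graded centre are trivial
    intro I hsub hmul hproj hd
    by_cases hbot : I = ⊥
    · exact Or.inl hbot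
    · right
      have hex : ∃ x ∈ I, x ≠ 0 := by
        by_contra hc
        push_neg at hc
        exact hbot ((AddSubgroup.eq_bot_iff_forall I).mpr hc)
      obtain ⟨x, hxI, hx0⟩ := hex
      obtain ⟨y, hyI, b, hbZ, hyb, hby⟩ :=
        dg_ideal_unit D hleft hright I hsub hproj hd hxI hx0
      have h1 : (1 : A) ∈ I := hyb ▸ hmul b hbZ y hyI
      refine Set.Subset.antisymm hsub fun z hz => ?_
      have := hmul z hz 1 h1
      rwa [one_mul] at this
  · -- the cycles of the graded centre commute
    intro x hx y hy hdx hdy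
    obtain ⟨s, hs⟩ := exists_sum_proj (𝒜 := 𝒜) x
    obtain ⟨t, ht⟩ := exists_sum_proj (𝒜 := 𝒜) y
    calc x * y = (∑ i ∈ s, GradedRing.proj 𝒜 i x) * (∑ j ∈ t, GradedRing.proj 𝒜 j y) := by
          rw [hs, ht]
      _ = ∑ i ∈ s, ∑ j ∈ t, GradedRing.proj 𝒜 i x * GradedRing.proj 𝒜 j y :=
          Finset.sum_mul_sum ..
      _ = ∑ i ∈ s, ∑ j ∈ t, GradedRing.proj 𝒜 j y * GradedRing.proj 𝒜 i x :=
          Finset.sum_congr rfl fun i _ => Finset.sum_congr rfl fun j _ =>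
            homog_comm D hleft hright (chom_proj hx i) (chom_proj hy j)
              (d_proj_zero D hdx i)
      _ = ∑ j ∈ t, ∑ i ∈ s, GradedRing.proj 𝒜 j y * GradedRing.proj 𝒜 i x :=
          Finset.sum_comm
      _ = (∑ j ∈ t, GradedRing.proj 𝒜 j y) * (∑ i ∈ s, GradedRing.proj 𝒜 i x) :=
          (Finset.sum_mul_sum ..).symm
      _ = y * x := by rw [hs, ht]
  · -- odd-degree nonzero central homogeneous cycles force `2 = 0`
    intro h2 i a hai haZ hda ha0
    by_contra hodd
    rw [Int.not_even_iff_odd] at hodd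
    have hch : Chom 𝒜 i a := by
      have := chom_proj haZ i
      rwa [proj_of_mem_same hai] at this
    exact h2 (two_eq_zero_of_odd D hleft hright hch hda ha0 hodd)
end

section
/- Let (A,d) be a dg-division ring such that ker(d) satisfies condition (REG). Then either (A,d) is acyclic (H(A,d) = 0) or d = 0. -/
variable {A : Type*} [Ring A] (𝒜 : ℤ → AddSubgroup A) [GradedRing 𝒜] (D : DGRingData 𝒜)

open DirectSum

lemma aux_proj_zero (w : A) (h : ∀ j : ℤ, (decompose 𝒜 w j : A) = 0) : w = 0 := by
  classical
  rw [← DirectSum.sum_support_decompose 𝒜 w]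
  exact Finset.sum_eq_zero fun j _ => h j

lemma aux_d_proj (x : A) (i : ℤ) :
    D.d ((decompose 𝒜 x i : A)) = (decompose 𝒜 (D.d x) (i + 1) : A) := by
  induction x using DirectSum.Decomposition.inductionOn 𝒜 with
  | zero => simp
  | @homogeneous k m =>
    by_cases h : i = k
    · subst h
      rw [DirectSum.decompose_of_mem_same 𝒜 m.2,
          DirectSum.decompose_of_mem_same 𝒜 (D.d_mem m.2)]
    · rw [DirectSum.decompose_of_mem_ne 𝒜 m.2 (Ne.symm h),
          DirectSum.decompose_of_mem_ne 𝒜 (D.d_mem m.2) (by omega), map_zero]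
  | add a b ha hb =>
    rw [decompose_add, DirectSum.add_apply, AddSubgroup.coe_add, map_add, ha, hb, map_add,
      decompose_add, DirectSum.add_apply, AddSubgroup.coe_add]

lemma aux_d_mul_cycle (a u : A) (hu : D.d u = 0) : D.d (a * u) = D.d a * u := by
  induction a using DirectSum.Decomposition.inductionOn 𝒜 with
  | zero => simp
  | @homogeneous k m => rw [D.leibniz m.2 u, hu, mul_zero, smul_zero, add_zero]
  | add a b ha hb => rw [add_mul, map_add, ha, hb, map_add, add_mul]

lemma aux_proj_mul_right (i : ℤ) (u : A) (hu : u ∈ 𝒜 i) (a : A) (j : ℤ) :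
    (decompose 𝒜 (a * u) (j + i) : A) = (decompose 𝒜 a j : A) * u := by
  induction a using DirectSum.Decomposition.inductionOn 𝒜 with
  | zero => simp
  | @homogeneous k m =>
    by_cases h : j = k
    · subst h
      rw [DirectSum.decompose_of_mem_same 𝒜 (SetLike.mul_mem_graded m.2 hu),
          DirectSum.decompose_of_mem_same 𝒜 m.2]
    · rw [DirectSum.decompose_of_mem_ne 𝒜 (SetLike.mul_mem_graded m.2 hu) (by omega),
          DirectSum.decompose_of_mem_ne 𝒜 m.2 (Ne.symm h), zero_mul]
  | add a b ha hb =>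
    rw [add_mul, decompose_add, DirectSum.add_apply, AddSubgroup.coe_add, ha, hb,
      decompose_add, DirectSum.add_apply, AddSubgroup.coe_add, add_mul]

lemma aux_proj_mul_left (i : ℤ) (u : A) (hu : u ∈ 𝒜 i) (b : A) (j : ℤ) :
    (decompose 𝒜 (u * b) (i + j) : A) = u * (decompose 𝒜 b j : A) := by
  induction b using DirectSum.Decomposition.inductionOn 𝒜 with
  | zero => simp
  | @homogeneous k m =>
    by_cases h : j = k
    · subst h
      rw [DirectSum.decompose_of_mem_same 𝒜 (SetLike.mul_mem_graded hu m.2),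
          DirectSum.decompose_of_mem_same 𝒜 m.2]
    · rw [DirectSum.decompose_of_mem_ne 𝒜 (SetLike.mul_mem_graded hu m.2) (by omega),
          DirectSum.decompose_of_mem_ne 𝒜 m.2 (Ne.symm h), mul_zero]
  | add a b ha hb =>
    rw [mul_add, decompose_add, DirectSum.add_apply, AddSubgroup.coe_add, ha, hb,
      decompose_add, DirectSum.add_apply, AddSubgroup.coe_add, mul_add]

lemma aux_d_one : D.d (1 : A) = 0 := by
  have h := D.leibniz (SetLike.one_mem_graded 𝒜) (1 : A)
  simp only [one_mul, mul_one, zpow_zero, Units.val_one, one_smul] at h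
  exact left_eq_add.mp h

lemma aux_inv (hleft : ∀ I : AddSubgroup A, IsDGLeftIdeal 𝒜 D I → I = ⊥ ∨ I = ⊤)
    (hright : ∀ I : AddSubgroup A, IsDGRightIdeal 𝒜 D I → I = ⊥ ∨ I = ⊤)
    (i : ℤ) (u : A) (hu : u ∈ 𝒜 i) (hdu : D.d u = 0) (hne : u ≠ 0) :
    ∃ v : A, v ∈ 𝒜 (-i) ∧ D.d v = 0 ∧ u * v = 1 ∧ v * u = 1 := by
  classical
  -- the left ideal A·u
  obtain ⟨a, hau⟩ : ∃ a : A, a * u = 1 := by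
    have hI : IsDGLeftIdeal 𝒜 D (AddMonoidHom.mulRight u).range := by
      refine ⟨?_, ?_, ?_⟩
      · rintro c x ⟨e, rfl⟩
        refine ⟨c * e, ?_⟩
        simp only [AddMonoidHom.mulRight_apply]
        rw [mul_assoc]
      · rintro x ⟨e, rfl⟩ j
        rw [GradedRing.proj_apply]
        have h := aux_proj_mul_right 𝒜 i u hu e (j - i)
        rw [sub_add_cancel] at h
        exact ⟨(decompose 𝒜 e (j - i) : A), h.symm⟩
      · rintro x ⟨e, rfl⟩
        exact ⟨D.d e, (aux_d_mul_cycle 𝒜 D e u hdu).symm⟩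
    rcases hleft _ hI with h | h
    · exfalso
      have hu' : u ∈ (AddMonoidHom.mulRight u).range := ⟨1, one_mul u⟩
      rw [h, AddSubgroup.mem_bot] at hu'
      exact hne hu'
    · have h1 : (1 : A) ∈ (AddMonoidHom.mulRight u).range := by rw [h]; trivial
      exact h1
  -- the right ideal u·A
  obtain ⟨b, hub⟩ : ∃ b : A, u * b = 1 := by
    have hI : IsDGRightIdeal 𝒜 D (AddMonoidHom.mulLeft u).range := by
      refine ⟨?_, ?_, ?_⟩
      · rintro c x ⟨e, rfl⟩
        refine ⟨e * c, ?_⟩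
        simp only [AddMonoidHom.coe_mulLeft]
        rw [mul_assoc]
      · rintro x ⟨e, rfl⟩ j
        rw [GradedRing.proj_apply]
        have h := aux_proj_mul_left 𝒜 i u hu e (j - i)
        have e2 : i + (j - i) = j := by omega
        rw [e2] at h
        exact ⟨(decompose 𝒜 e (j - i) : A), h.symm⟩
      · rintro x ⟨e, rfl⟩
        refine ⟨(((-1 : ℤˣ) ^ i : ℤˣ) : ℤ) • D.d e, ?_⟩
        simp only [AddMonoidHom.coe_mulLeft]
        rw [D.leibniz hu e, hdu, zero_mul, zero_add, mul_smul_comm]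
    rcases hright _ hI with h | h
    · exfalso
      have hu' : u ∈ (AddMonoidHom.mulLeft u).range := ⟨1, mul_one u⟩
      rw [h, AddSubgroup.mem_bot] at hu'
      exact hne hu'
    · have h1 : (1 : A) ∈ (AddMonoidHom.mulLeft u).range := by rw [h]; trivial
      exact h1
  have hab : a = b := by
    calc a = a * (u * b) := by rw [hub, mul_one]
    _ = (a * u) * b := by rw [mul_assoc]
    _ = b := by rw [hau, one_mul]
  rw [← hab] at hub
  have hda : D.d a = 0 := by
    have h0 : D.d a * u = 0 := by
      rw [← aux_d_mul_cycle 𝒜 D a u hdu, hau, aux_d_one]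
    calc D.d a = D.d a * (u * a) := by rw [hub, mul_one]
    _ = (D.d a * u) * a := by rw [mul_assoc]
    _ = 0 := by rw [h0, zero_mul]
  have hproj0 : ∀ j : ℤ, j ≠ -i → (decompose 𝒜 a j : A) = 0 := by
    intro j hj
    have h1 : u * (decompose 𝒜 a j : A) = (decompose 𝒜 (u * a) (i + j) : A) :=
      (aux_proj_mul_left 𝒜 i u hu a j).symm
    have h2 : (decompose 𝒜 (u * a) (i + j) : A) = 0 := by
      rw [hub]
      exact DirectSum.decompose_of_mem_ne 𝒜 (SetLike.one_mem_graded 𝒜) (by omega)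
    calc (decompose 𝒜 a j : A) = (a * u) * (decompose 𝒜 a j : A) := by rw [hau, one_mul]
    _ = a * (u * (decompose 𝒜 a j : A)) := by rw [mul_assoc]
    _ = 0 := by rw [h1, h2, mul_zero]
  have hmem : a ∈ 𝒜 (-i) := by
    have hz : a - (decompose 𝒜 a (-i) : A) = 0 := by
      apply aux_proj_zero 𝒜
      intro j
      rw [decompose_sub, DirectSum.sub_apply, AddSubgroup.coe_sub]
      by_cases h : j = -i
      · subst h
        rw [DirectSum.decompose_of_mem_same 𝒜 (SetLike.coe_mem _), sub_self]
      · rw [hproj0 j h,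
          DirectSum.decompose_of_mem_ne 𝒜 (SetLike.coe_mem (decompose 𝒜 a (-i))) (Ne.symm h),
          sub_zero]
    have heq : a = (decompose 𝒜 a (-i) : A) := by
      have := sub_eq_zero.mp hz
      exact this
    rw [heq]
    exact SetLike.coe_mem _
  exact ⟨a, hmem, hda, hub, hau⟩

theorem aux_main (hleft : ∀ I : AddSubgroup A, IsDGLeftIdeal 𝒜 D I → I = ⊥ ∨ I = ⊤)
    (hright : ∀ I : AddSubgroup A, IsDGRightIdeal 𝒜 D I → I = ⊥ ∨ I = ⊤) :
    (∀ a : A, D.d a = 0 → ∃ b : A, D.d b = a) ∨ D.d = 0 := by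
  classical
  by_cases hd : D.d = 0
  · exact Or.inr hd
  left
  obtain ⟨x, hx⟩ : ∃ x : A, D.d x ≠ 0 := by
    by_contra h
    push_neg at h
    exact hd (AddMonoidHom.ext h)
  obtain ⟨i, hi⟩ : ∃ i : ℤ, (decompose 𝒜 (D.d x) i : A) ≠ 0 := by
    by_contra h
    push_neg at h
    exact hx (aux_proj_zero 𝒜 _ h)
  set t : A := (decompose 𝒜 x (i - 1) : A) with ht_def
  have ht : t ∈ 𝒜 (i - 1) := SetLike.coe_mem _
  have hdt : D.d t = (decompose 𝒜 (D.d x) i : A) := by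
    have h := aux_d_proj 𝒜 D x (i - 1)
    rwa [sub_add_cancel] at h
  set u : A := D.d t with hu_def
  have hu : u ∈ 𝒜 i := by
    have h := D.d_mem ht
    rwa [sub_add_cancel] at h
  have hdu : D.d u = 0 := D.d_sq t
  have hune : u ≠ 0 := by rw [hdt]; exact hi
  obtain ⟨v, hv, hdv, huv, hvu⟩ := aux_inv 𝒜 D hleft hright i u hu hdu hune
  -- every homogeneous cycle is a boundary
  have hom : ∀ (k : ℤ) (y : A), y ∈ 𝒜 k → D.d y = 0 → ∃ b : A, D.d b = y := by
    intro k y hy hdy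
    refine ⟨(((-1 : ℤˣ) ^ (k + -i) : ℤˣ) : ℤ) • (y * v * t), ?_⟩
    have hw : y * v ∈ 𝒜 (k + -i) := SetLike.mul_mem_graded hy hv
    have hdw : D.d (y * v) = 0 := by
      rw [aux_d_mul_cycle 𝒜 D y v hdv, hdy, zero_mul]
    rw [map_zsmul, D.leibniz hw t, hdw, zero_mul, zero_add, smul_smul, ← Units.val_mul,
      Int.units_mul_self, Units.val_one, one_smul, ← hu_def, mul_assoc, hvu, mul_one]
  -- general cycles
  intro z hz
  have hk : ∀ k : ℤ, ∃ b : A, D.d b = (decompose 𝒜 z k : A) := by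
    intro k
    refine hom k _ (SetLike.coe_mem _) ?_
    rw [aux_d_proj 𝒜 D z k, hz]
    simp
  refine ⟨∑ k ∈ DFinsupp.support (decompose 𝒜 z), Classical.choose (hk k), ?_⟩
  rw [map_sum]
  calc (∑ k ∈ DFinsupp.support (decompose 𝒜 z), D.d (Classical.choose (hk k)))
      = ∑ k ∈ DFinsupp.support (decompose 𝒜 z), (decompose 𝒜 z k : A) :=
        Finset.sum_congr rfl fun k _ => Classical.choose_spec (hk k)
    _ = z := DirectSum.sum_support_decompose 𝒜 z

/-- a dg-division ring whose cycles satisfy (REG) is either acyclic or has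
zero differential. -/
theorem stmt_5 {A : Type*} [Ring A] [Nontrivial A] (𝒜 : ℤ → AddSubgroup A) [GradedRing 𝒜]
    (D : DGRingData 𝒜)
    (hleft : ∀ I : AddSubgroup A, IsDGLeftIdeal 𝒜 D I → I = ⊥ ∨ I = ⊤)
    (hright : ∀ I : AddSubgroup A, IsDGRightIdeal 𝒜 D I → I = ⊥ ∨ I = ⊤)
    (hreg : REG 𝒜 D) :
    (∀ a : A, D.d a = 0 → ∃ b : A, D.d b = a) ∨ D.d = 0 := by
  exact aux_main 𝒜 D hleft hright
end
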